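/- arXiv:1501.05266 — 2 statements merged into one kernel-verified Lean document; each statement's English description precedes it below -/
import Mathlib

section
/- Consider an interconnected system ẋᵢ = fᵢ(xᵢ) + gᵢ(x) for i = 1,…,m with x = (x₁,…,x_m), where fᵢ(0)=0 and gᵢ(0)=0, and let Vᵢ : ℝ^{nᵢ} → ℝ be continuously differentiable with Vᵢ(0)=0 and Vᵢ positive definite. Suppose for each i there is a strictly decreasing sequence (εᵢ^k)_{k≥0} of positive reals with lim_k εᵢ^k = 0, such that for all i and k: ⟨∇Vᵢ(xᵢ), fᵢ(xᵢ)+gᵢ(x)⟩ < 0 for all x in the set D_i^k := { x : εᵢ^{k+1} ≤ Vᵢ(xᵢ) ≤ εᵢ^k, and Vⱼ(xⱼ) ≤ εⱼ^k for all j ≠ i }. Assume further the Lie derivatives are continuous and each D_i^k is compact. Then every solution with initial condition in the set { x : Vᵢ(xᵢ) ≤ εᵢ⁰ for all i } remains in this set for all t ≥ 0 and satisfies lim_{t→∞} Vᵢ(xᵢ(t)) = 0 for all i; in particular the origin is asymptotically stable on this set. -/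
open Filter Topology

lemma barrier {ι : Type*} [Finite ι] (W w : ι → ℝ → ℝ) (c : ι → ℝ) (a : ℝ)
    (hderiv : ∀ i, ∀ t ≥ a, HasDerivAt (W i) (w i t) t)
    (hneg : ∀ i, ∀ t ≥ a, (∀ j, W j t ≤ c j) → W i t = c i → w i t < 0)
    (h0 : ∀ i, W i a ≤ c i) :
    ∀ t ≥ a, ∀ i, W i t ≤ c i := by
  by_contra hcon
  push_neg at hcon
  obtain ⟨t₀, ht₀a, i₀, hi₀⟩ := hcon
  set B : Set ℝ := {t | a ≤ t ∧ ∃ i, c i < W i t} with hBdef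
  have hBne : B.Nonempty := ⟨t₀, ht₀a, i₀, hi₀⟩
  have hBbdd : BddBelow B := ⟨a, fun t ht => ht.1⟩
  set T := sInf B with hTdef
  have hTa : a ≤ T := le_csInf hBne fun t ht => ht.1
  have hWT : ∀ j, W j T ≤ c j := by
    intro j
    by_contra hj
    push_neg at hj
    have hev : ∀ᶠ s in 𝓝 T, c j < W j s :=
      (hderiv j T hTa).continuousAt.eventually (lt_mem_nhds hj)
    rcases eq_or_lt_of_le hTa with heq | hlt
    · have := hev.self_of_nhds
      have := h0 j
      rw [heq] at this
      linarith
    · have hev2 : ∀ᶠ s in 𝓝 T, a < s := (isOpen_Ioi.eventually_mem hlt)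
      have h3 : ∀ᶠ s in 𝓝[<] T, (a < s ∧ c j < W j s) ∧ s ∈ Set.Iio T :=
        ((hev2.and hev).filter_mono nhdsWithin_le_nhds).and self_mem_nhdsWithin
      obtain ⟨s, ⟨hs1, hs2⟩, hs3⟩ := h3.exists
      have hsB : s ∈ B := ⟨hs1.le, j, hs2⟩
      exact absurd (csInf_le hBbdd hsB) (not_le.2 hs3)
  have hevgt : ∀ j, ∀ᶠ s in 𝓝[>] T, W j s ≤ c j := by
    intro j
    rcases eq_or_lt_of_le (hWT j) with heq | hlt
    · have hw : w j T < 0 := hneg j T hTa hWT heq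
      have hslope : Tendsto (slope (W j) T) (𝓝[>] T) (𝓝 (w j T)) :=
        (hasDerivAt_iff_tendsto_slope.mp (hderiv j T hTa)).mono_left
          (nhdsWithin_mono T fun s hs => Set.mem_compl_singleton_iff.mpr hs.ne')
      have hsneg : ∀ᶠ s in 𝓝[>] T, slope (W j) T s < 0 :=
        hslope.eventually (gt_mem_nhds hw)
      filter_upwards [hsneg, self_mem_nhdsWithin] with s h1 h2
      rw [slope_def_field] at h1
      have hpos : 0 < s - T := sub_pos.2 h2
      rcases div_neg_iff.mp h1 with ⟨h3, h4⟩ | ⟨h3, h4⟩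
      · linarith
      · linarith
    · exact (((hderiv j T hTa).continuousAt.eventually
        (gt_mem_nhds hlt)).filter_mono nhdsWithin_le_nhds).mono fun s hs => hs.le
  have hall : ∀ᶠ s in 𝓝[>] T, ∀ j, W j s ≤ c j := eventually_all.2 hevgt
  have hBsub : B ⊆ Set.Ioi T := by
    intro t ht
    have h1 : T ≤ t := csInf_le hBbdd ht
    rcases eq_or_lt_of_le h1 with heq | hlt
    · exfalso
      obtain ⟨i, hi⟩ := ht.2
      rw [← heq] at hi
      exact absurd (hWT i) (not_le.2 hi)
    · exact hlt
  have hcl : T ∈ closure B := csInf_mem_closure hBne hBbdd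
  haveI hne : (𝓝[B] T).NeBot := mem_closure_iff_nhdsWithin_neBot.mp hcl
  have hle : 𝓝[B] T ≤ 𝓝[>] T := nhdsWithin_mono T hBsub
  have hfin : ∀ᶠ s in 𝓝[B] T, (∀ j, W j s ≤ c j) ∧ s ∈ B :=
    (hall.filter_mono hle).and self_mem_nhdsWithin
  obtain ⟨s, hs1, hs2⟩ := hfin.exists
  obtain ⟨i, hi⟩ := hs2.2
  exact absurd (hs1 i) (not_le.2 hi)

/-- Lemma 1 of the paper: vector-Lyapunov-function certification of asymptotic
stability for an interconnected system `ẋᵢ = fᵢ(xᵢ) + gᵢ(x)`.  If for each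
subsystem there is a strictly decreasing null sequence `(εᵢᵏ)` of positive
reals such that each Lie derivative is strictly negative on the (compact)
region `Dᵢᵏ`, then every solution starting in `{x : Vᵢ(xᵢ) ≤ εᵢ⁰ ∀i}` stays
in that set and all `Vᵢ(xᵢ(t)) → 0`. -/
theorem stmt_8 {m : ℕ} (n : Fin m → ℕ)
    (f : (i : Fin m) → (Fin (n i) → ℝ) → (Fin (n i) → ℝ))
    (g : (i : Fin m) → ((i : Fin m) → Fin (n i) → ℝ) → (Fin (n i) → ℝ))
    (hf0 : ∀ i, f i 0 = 0) (hg0 : ∀ i, g i 0 = 0)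
    (V : (i : Fin m) → (Fin (n i) → ℝ) → ℝ)
    (hV : ∀ i, ContDiff ℝ 1 (V i)) (hV0 : ∀ i, V i 0 = 0)
    (hVpos : ∀ i, ∀ y : Fin (n i) → ℝ, y ≠ 0 → 0 < V i y)
    (ε : Fin m → ℕ → ℝ)
    (hεpos : ∀ i k, 0 < ε i k)
    (hεdec : ∀ i, StrictAnti (ε i))
    (hεlim : ∀ i, Tendsto (ε i) atTop (nhds 0))
    (hLie : ∀ i k, ∀ x : (i : Fin m) → Fin (n i) → ℝ,
      (ε i (k + 1) ≤ V i (x i) ∧ V i (x i) ≤ ε i k ∧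
        ∀ j, j ≠ i → V j (x j) ≤ ε j k) →
      fderiv ℝ (V i) (x i) (f i (x i) + g i x) < 0)
    (hLieCont : ∀ i, Continuous fun x : (i : Fin m) → Fin (n i) → ℝ =>
      fderiv ℝ (V i) (x i) (f i (x i) + g i x))
    (hDcompact : ∀ i k, IsCompact {x : (i : Fin m) → Fin (n i) → ℝ |
      ε i (k + 1) ≤ V i (x i) ∧ V i (x i) ≤ ε i k ∧
        ∀ j, j ≠ i → V j (x j) ≤ ε j k}) :
    ∀ x : ℝ → (i : Fin m) → Fin (n i) → ℝ,
      (∀ i, ∀ t ≥ (0 : ℝ),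
        HasDerivAt (fun s => x s i) (f i (x t i) + g i (x t)) t) →
      (∀ i, V i (x 0 i) ≤ ε i 0) →
      (∀ t ≥ (0 : ℝ), ∀ i, V i (x t i) ≤ ε i 0) ∧
      (∀ i, Tendsto (fun t => V i (x t i)) atTop (nhds 0)) := by
  intro x hx hx0
  set W : Fin m → ℝ → ℝ := fun i t => V i (x t i) with hWdef
  set L : Fin m → ((i : Fin m) → Fin (n i) → ℝ) → ℝ :=
    fun i y => fderiv ℝ (V i) (y i) (f i (y i) + g i y) with hLdef
  have hWderiv : ∀ i, ∀ t ≥ (0:ℝ), HasDerivAt (W i) (L i (x t)) t := by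
    intro i t ht
    have h1 : HasFDerivAt (V i) (fderiv ℝ (V i) (x t i)) (x t i) :=
      (((hV i).differentiable one_ne_zero) (x t i)).hasFDerivAt
    exact h1.comp_hasDerivAt t (hx i t ht)
  have hVnn : ∀ i t, 0 ≤ W i t := by
    intro i t
    rcases eq_or_ne (x t i) 0 with h | h
    · simp only [hWdef, h, hV0 i, le_refl]
    · exact (hVpos i _ h).le
  -- uniform negativity bound on each compact band
  have hδ : ∀ i k, ∃ δ > (0:ℝ), ∀ y : (i : Fin m) → Fin (n i) → ℝ,
      (ε i (k + 1) ≤ V i (y i) ∧ V i (y i) ≤ ε i k ∧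
        ∀ j, j ≠ i → V j (y j) ≤ ε j k) → L i y ≤ -δ := by
    intro i k
    set D : Set ((i : Fin m) → Fin (n i) → ℝ) :=
      {y | ε i (k + 1) ≤ V i (y i) ∧ V i (y i) ≤ ε i k ∧
        ∀ j, j ≠ i → V j (y j) ≤ ε j k} with hDdef
    rcases D.eq_empty_or_nonempty with hD | hD
    · refine ⟨1, one_pos, fun y hy => absurd (show y ∈ D from hy) ?_⟩
      simp [hD]
    · obtain ⟨y₀, hy₀D, hy₀max⟩ := (hDcompact i k).exists_isMaxOn hD
        ((hLieCont i).continuousOn)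
      have hneg0 : L i y₀ < 0 := hLie i k y₀ hy₀D
      refine ⟨-(L i y₀), by linarith, fun y hy => ?_⟩
      have h : L i y ≤ L i y₀ := hy₀max (show y ∈ D from hy)
      linarith
  -- the basic invariance at level 0
  have hinv0 : ∀ t ≥ (0:ℝ), ∀ i, W i t ≤ ε i 0 := by
    refine barrier W (fun i t => L i (x t)) (fun i => ε i 0) 0 hWderiv ?_ hx0
    intro i t ht hall heq
    refine hLie i 0 (x t) ⟨?_, ?_, fun j _ => hall j⟩
    · show ε i (0+1) ≤ W i t
      rw [heq]; exact (hεdec i Nat.zero_lt_one).le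
    · show W i t ≤ ε i 0
      rw [heq]
  -- inductive descent through the levels
  have hGood : ∀ k, ∃ T ≥ (0:ℝ), ∀ t ≥ T, ∀ i, W i t ≤ ε i k := by
    intro k
    induction k with
    | zero => exact ⟨0, le_rfl, hinv0⟩
    | succ k ih =>
      obtain ⟨T, hT0, hT⟩ := ih
      have hstep : ∀ i, ∃ s ≥ T, ∀ t ≥ s, W i t ≤ ε i (k+1) := by
        intro i
        obtain ⟨δ, hδpos, hδle⟩ := hδ i k
        set Δ : ℝ := (ε i k - ε i (k+1)) / δ with hΔdef
        have hεlt : ε i (k+1) < ε i k := hεdec i (Nat.lt_succ_self k)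
        have hΔpos : 0 < Δ := div_pos (by linarith) hδpos
        have hex : ∃ s ∈ Set.Icc T (T + Δ), W i s ≤ ε i (k+1) := by
          by_contra hcon
          push_neg at hcon
          have hderivle : ∀ t ∈ Set.Icc T (T + Δ), L i (x t) ≤ -δ := by
            intro t ht
            exact hδle (x t) ⟨(hcon t ht).le, hT t ht.1 i, fun j _ => hT t ht.1 j⟩
          set u : ℝ → ℝ := fun t => W i t + δ * t with hudef
          have hu : ∀ t ∈ Set.Icc T (T + Δ), HasDerivAt u (L i (x t) + δ) t := by
            intro t ht
            have h1 := (hWderiv i t (le_trans hT0 ht.1)).add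
              ((hasDerivAt_id t).const_mul δ)
            rw [mul_one] at h1
            exact h1
          have hanti : AntitoneOn u (Set.Icc T (T + Δ)) := by
            refine antitoneOn_of_deriv_nonpos (convex_Icc _ _)
              (fun t ht => (hu t ht).continuousAt.continuousWithinAt)
              (fun t ht => ?_) (fun t ht => ?_)
            · rw [interior_Icc] at ht
              exact (hu t (Set.Ioo_subset_Icc_self ht)).differentiableAt.differentiableWithinAt
            · rw [interior_Icc] at ht
              rw [(hu t (Set.Ioo_subset_Icc_self ht)).deriv]
              linarith [hderivle t (Set.Ioo_subset_Icc_self ht)]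
          have hmem1 : T ∈ Set.Icc T (T + Δ) := Set.left_mem_Icc.2 (by linarith)
          have hmem2 : T + Δ ∈ Set.Icc T (T + Δ) := Set.right_mem_Icc.2 (by linarith)
          have h1 : u (T + Δ) ≤ u T := hanti hmem1 hmem2 (by linarith)
          have hδΔ : δ * Δ = ε i k - ε i (k+1) := by
            rw [hΔdef, mul_div_cancel₀ _ (ne_of_gt hδpos)]
          have h2 : W i T ≤ ε i k := hT T le_rfl i
          have h3 : ε i (k+1) < W i (T + Δ) := hcon (T + Δ) hmem2
          simp only [hudef] at h1
          nlinarith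
        obtain ⟨s₀, hs₀mem, hs₀⟩ := hex
        refine ⟨s₀, hs₀mem.1, fun t ht => ?_⟩
        have hbar := barrier (fun _ : Unit => W i) (fun _ t => L i (x t))
          (fun _ => ε i (k+1)) s₀
          (fun _ t ht' => hWderiv i t (by linarith [hs₀mem.1]))
          ?_ (fun _ => hs₀) t ht ()
        · exact hbar
        · intro _ t' ht' _ heq
          refine hLie i k (x t') ⟨heq.ge, hT t' (le_trans hs₀mem.1 ht') i,
            fun j _ => hT t' (le_trans hs₀mem.1 ht') j⟩
      choose s hs1 hs2 using hstep
      refine ⟨T + ∑ j, (s j - T), ?_, ?_⟩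
      · have : (0:ℝ) ≤ ∑ j, (s j - T) :=
          Finset.sum_nonneg fun j _ => sub_nonneg.2 (hs1 j)
        linarith
      · intro t ht i
        have h1 : s i - T ≤ ∑ j, (s j - T) :=
          Finset.single_le_sum (fun j _ => sub_nonneg.2 (hs1 j)) (Finset.mem_univ i)
        exact hs2 i t (by linarith)
  refine ⟨hinv0, ?_⟩
  intro i
  rw [Metric.tendsto_atTop]
  intro εv hεv
  obtain ⟨k, hk⟩ := ((hεlim i).eventually (gt_mem_nhds hεv)).exists
  obtain ⟨T, hT0, hT⟩ := hGood k
  refine ⟨T, fun t ht => ?_⟩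
  rw [Real.dist_eq, sub_zero, abs_of_nonneg (hVnn i t)]
  exact lt_of_le_of_lt (hT t ht i) hk
end

section
/- Under the hypotheses of Lemma 1 but with the weakened conclusion that lim_{k→∞} εᵢ^k = Lᵢ ≥ 0 (not necessarily zero), every trajectory starting in { x : Vᵢ(xᵢ) ≤ εᵢ⁰ ∀i } satisfies limsup_{t→∞} Vᵢ(xᵢ(t)) ≤ Lᵢ for all i, and in particular the trajectory remains in the set { x : Vᵢ(xᵢ) ≤ εᵢ⁰ ∀i } for all time. -/
open Filter
open Set Topology

/-- Continuous induction: forward invariance of a box. -/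
lemma inv_aux {m : ℕ} (φ : Fin m → ℝ → ℝ) (d : Fin m → ℝ → ℝ)
    (hderiv : ∀ i t, (0:ℝ) ≤ t → HasDerivAt (φ i) (d i t) t)
    (c : Fin m → ℝ)
    (hbound : ∀ i t, (0:ℝ) ≤ t → φ i t = c i → (∀ j, φ j t ≤ c j) → d i t < 0)
    (a : ℝ) (ha : 0 ≤ a) (h0 : ∀ i, φ i a ≤ c i) :
    ∀ t, a ≤ t → ∀ i, φ i t ≤ c i := by
  by_contra hcon
  push_neg at hcon
  obtain ⟨t0, ht0, i0, hi0⟩ := hcon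
  set S : Set ℝ := {t | a ≤ t ∧ ∃ i, c i < φ i t} with hSdef
  have hSne : S.Nonempty := ⟨t0, ht0, i0, hi0⟩
  have hbd : BddBelow S := ⟨a, fun s hs => hs.1⟩
  set τ := sInf S with hτdef
  have hτa : a ≤ τ := le_csInf hSne fun s hs => hs.1
  have hτ0 : (0:ℝ) ≤ τ := ha.trans hτa
  have hcont : ∀ i t, (0:ℝ) ≤ t → ContinuousAt (φ i) t :=
    fun i t ht => (hderiv i t ht).continuousAt
  have hbefore : ∀ s, a ≤ s → s < τ → ∀ i, φ i s ≤ c i := by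
    intro s hs hsτ i
    by_contra h
    push_neg at h
    exact absurd (csInf_le hbd ⟨hs, i, h⟩) (not_le.mpr hsτ)
  have hτle : ∀ i, φ i τ ≤ c i := by
    intro i
    rcases eq_or_lt_of_le hτa with h | h
    · exact h ▸ h0 i
    · have htend : Tendsto (φ i) (𝓝[<] τ) (𝓝 (φ i τ)) :=
        ((hcont i τ hτ0).continuousWithinAt).tendsto
      refine le_of_tendsto htend ?_
      filter_upwards [Ioo_mem_nhdsLT h] with s hs
      exact hbefore s hs.1.le hs.2 i
  have hτnotS : τ ∉ S := by
    rintro ⟨-, i, hi⟩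
    exact absurd (hτle i) (not_le.mpr hi)
  -- frequently in 𝓝[>] τ, points of S
  have hfreq : ∃ᶠ s in 𝓝[>] τ, s ∈ S := by
    rw [(nhdsGT_basis τ).frequently_iff]
    intro δ hδ
    obtain ⟨s, hsS, hs⟩ := exists_lt_of_csInf_lt hSne (hδ : sInf S < δ)
    have h1 : τ ≤ s := csInf_le hbd hsS
    have h2 : τ ≠ s := fun h => hτnotS (h ▸ hsS)
    exact ⟨s, ⟨lt_of_le_of_ne h1 h2, hs⟩, hsS⟩
  -- eventually in 𝓝[>] τ, all coordinates strictly below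
  have hev : ∀ᶠ s in 𝓝[>] τ, ∀ i, φ i s ≤ c i := by
    rw [eventually_all]
    intro i
    rcases lt_or_eq_of_le (hτle i) with h | h
    · have : ∀ᶠ s in 𝓝 τ, φ i s < c i :=
        (hcont i τ hτ0).eventually_lt continuousAt_const h
      exact ((this.filter_mono nhdsWithin_le_nhds).mono fun s hs => hs.le)
    · have hd : d i τ < 0 := hbound i τ hτ0 h hτle
      have hds : HasDerivWithinAt (φ i) (d i τ) (Ioi τ) τ :=
        (hderiv i τ hτ0).hasDerivWithinAt
      have hslope : Tendsto (slope (φ i) τ) (𝓝[>] τ) (𝓝 (d i τ)) := by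
        have := hasDerivWithinAt_iff_tendsto_slope.1 hds
        rwa [Set.diff_singleton_eq_self (by simp)] at this
      have hsl : ∀ᶠ s in 𝓝[>] τ, slope (φ i) τ s < 0 :=
        hslope.eventually (Filter.Tendsto.eventually_lt_const hd tendsto_id) |>.mono (fun _ h => h)
      filter_upwards [hsl, self_mem_nhdsWithin] with s hs hs'
      have hsτ : 0 < s - τ := sub_pos.2 hs'
      have h2 : φ i s - φ i τ = slope (φ i) τ s * (s - τ) := by
        rw [slope_def_field]; field_simp
      have h3 : φ i s - φ i τ < 0 := h2 ▸ mul_neg_of_neg_of_pos hs hsτ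
      rw [← h]; linarith
  obtain ⟨s, hs1, hs2⟩ := (hev.and_frequently hfreq).exists
  obtain ⟨-, i, hi⟩ := hs2
  exact absurd (hs1 i) (not_le.mpr hi)


lemma descent_aux (φ d : ℝ → ℝ) (hderiv : ∀ t, (0:ℝ) ≤ t → HasDerivAt φ (d t) t)
    (M : ℝ) (hM : M < 0) (T : ℝ) (hT : 0 ≤ T) (c : ℝ)
    (hd : ∀ t, T ≤ t → d t ≤ M) : ∃ t, T ≤ t ∧ φ t ≤ c := by
  set ψ : ℝ → ℝ := fun t => φ t - M * t with hψ
  have hψd : ∀ t, T ≤ t → HasDerivAt ψ (d t - M) t := by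
    intro t ht
    have := (hderiv t (hT.trans ht)).sub ((hasDerivAt_id t).const_mul M)
    simp only [mul_one] at this; exact this
  have hanti : AntitoneOn ψ (Ici T) := by
    apply antitoneOn_of_deriv_nonpos (convex_Ici T)
    · exact fun t ht => ((hψd t ht).continuousAt).continuousWithinAt
    · intro t ht
      rw [interior_Ici] at ht
      exact ((hψd t (le_of_lt ht)).differentiableAt).differentiableWithinAt
    · intro t ht
      rw [interior_Ici] at ht
      rw [(hψd t (le_of_lt ht)).deriv]
      linarith [hd t (le_of_lt ht)]
  set s : ℝ := max 0 ((φ T - c) / (-M)) with hs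
  refine ⟨T + s, le_add_of_nonneg_right (le_max_left _ _), ?_⟩
  have h1 : ψ (T + s) ≤ ψ T :=
    hanti (mem_Ici.2 le_rfl) (mem_Ici.2 (le_add_of_nonneg_right (le_max_left _ _)))
      (le_add_of_nonneg_right (le_max_left _ _))
  have h2 : (φ T - c) / (-M) ≤ s := le_max_right _ _
  have h3 : M * s ≤ c - φ T := by
    have h4 := mul_le_mul_of_nonpos_left h2 hM.le
    have h5 : M * ((φ T - c) / (-M)) = c - φ T := by
      field_simp
      rw [mul_div_cancel_left₀ _ hM.ne, neg_sub]
    linarith [h4, h5.le, h5.ge]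
  have : φ (T + s) - M * (T + s) ≤ φ T - M * T := h1
  linarith [this, h3]


/-- Weakened version of Lemma 1: if the level sequences `(εᵢᵏ)` decrease to
limits `Lᵢ ≥ 0` (not necessarily zero), every trajectory starting in
`{x : Vᵢ(xᵢ) ≤ εᵢ⁰ ∀i}` remains there and `limsup_{t→∞} Vᵢ(xᵢ(t)) ≤ Lᵢ`. -/
theorem stmt_9 {m : ℕ} (n : Fin m → ℕ)
    (f : (i : Fin m) → (Fin (n i) → ℝ) → (Fin (n i) → ℝ))
    (g : (i : Fin m) → ((i : Fin m) → Fin (n i) → ℝ) → (Fin (n i) → ℝ))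
    (hf0 : ∀ i, f i 0 = 0) (hg0 : ∀ i, g i 0 = 0)
    (V : (i : Fin m) → (Fin (n i) → ℝ) → ℝ)
    (hV : ∀ i, ContDiff ℝ 1 (V i)) (hV0 : ∀ i, V i 0 = 0)
    (hVpos : ∀ i, ∀ y : Fin (n i) → ℝ, y ≠ 0 → 0 < V i y)
    (ε : Fin m → ℕ → ℝ) (L : Fin m → ℝ)
    (hL : ∀ i, 0 ≤ L i)
    (hεpos : ∀ i k, 0 < ε i k)
    (hεdec : ∀ i, StrictAnti (ε i))
    (hεlim : ∀ i, Tendsto (ε i) atTop (nhds (L i)))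
    (hLie : ∀ i k, ∀ x : (i : Fin m) → Fin (n i) → ℝ,
      (ε i (k + 1) ≤ V i (x i) ∧ V i (x i) ≤ ε i k ∧
        ∀ j, j ≠ i → V j (x j) ≤ ε j k) →
      fderiv ℝ (V i) (x i) (f i (x i) + g i x) < 0)
    (hLieCont : ∀ i, Continuous fun x : (i : Fin m) → Fin (n i) → ℝ =>
      fderiv ℝ (V i) (x i) (f i (x i) + g i x))
    (hDcompact : ∀ i k, IsCompact {x : (i : Fin m) → Fin (n i) → ℝ |
      ε i (k + 1) ≤ V i (x i) ∧ V i (x i) ≤ ε i k ∧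
        ∀ j, j ≠ i → V j (x j) ≤ ε j k}) :
    ∀ x : ℝ → (i : Fin m) → Fin (n i) → ℝ,
      (∀ i, ∀ t ≥ (0 : ℝ),
        HasDerivAt (fun s => x s i) (f i (x t i) + g i (x t)) t) →
      (∀ i, V i (x 0 i) ≤ ε i 0) →
      (∀ t ≥ (0 : ℝ), ∀ i, V i (x t i) ≤ ε i 0) ∧
      (∀ i, limsup (fun t => V i (x t i)) atTop ≤ L i) := by
  intro x hx hx0
  set φ : Fin m → ℝ → ℝ := fun i t => V i (x t i) with hφdef
  set d : Fin m → ℝ → ℝ :=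
    fun i t => fderiv ℝ (V i) (x t i) (f i (x t i) + g i (x t)) with hddef
  have hderiv : ∀ i t, (0:ℝ) ≤ t → HasDerivAt (φ i) (d i t) t := by
    intro i t ht
    have h1 : HasFDerivAt (V i) (fderiv ℝ (V i) (x t i)) (x t i) :=
      (((hV i).differentiable one_ne_zero) (x t i)).hasFDerivAt
    exact h1.comp_hasDerivAt t (hx i t ht)
  have hboundk : ∀ k i t, (0:ℝ) ≤ t → φ i t = ε i k →
      (∀ j, φ j t ≤ ε j k) → d i t < 0 := by
    intro k i t ht heq hle
    refine hLie i k (x t) ⟨?_, ?_, ?_⟩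
    · rw [show V i (x t i) = φ i t from rfl, heq]
      exact (hεdec i (Nat.lt_succ_self k)).le
    · exact heq.le
    · exact fun j _ => hle j
  have h0box : ∀ t, (0:ℝ) ≤ t → ∀ i, φ i t ≤ ε i 0 :=
    inv_aux φ d hderiv (fun i => ε i 0) (hboundk 0) 0 le_rfl hx0
  -- main inductive claim
  have main : ∀ k, ∃ T, (0:ℝ) ≤ T ∧ ∀ t, T ≤ t → ∀ i, φ i t ≤ ε i k := by
    intro k
    induction k with
    | zero => exact ⟨0, le_rfl, h0box⟩
    | succ k ih =>
      obtain ⟨T, hT0, hT⟩ := ih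
      have step : ∀ i, ∃ t, T ≤ t ∧ ∀ s, t ≤ s → φ i s ≤ ε i (k+1) := by
        intro i
        -- descent: find a time where φ i ≤ ε i (k+1)
        have hdes : ∃ t, T ≤ t ∧ φ i t ≤ ε i (k+1) := by
          by_contra hcon
          push_neg at hcon
          have hmem : ∀ t, T ≤ t → x t ∈ {z : (i : Fin m) → Fin (n i) → ℝ |
              ε i (k + 1) ≤ V i (z i) ∧ V i (z i) ≤ ε i k ∧
                ∀ j, j ≠ i → V j (z j) ≤ ε j k} := by
            intro t ht
            exact ⟨(hcon t ht).le, hT t ht i, fun j _ => hT t ht j⟩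
          have hne : Set.Nonempty {z : (i : Fin m) → Fin (n i) → ℝ |
              ε i (k + 1) ≤ V i (z i) ∧ V i (z i) ≤ ε i k ∧
                ∀ j, j ≠ i → V j (z j) ≤ ε j k} := ⟨x T, hmem T le_rfl⟩
          obtain ⟨z, hz, hzmax⟩ := (hDcompact i k).exists_isMaxOn hne
            (hLieCont i).continuousOn
          have hM : fderiv ℝ (V i) (z i) (f i (z i) + g i z) < 0 := hLie i k z hz
          have hd : ∀ t, T ≤ t → d i t ≤
              fderiv ℝ (V i) (z i) (f i (z i) + g i z) :=
            fun t ht => hzmax (hmem t ht)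
          obtain ⟨t, ht1, ht2⟩ := descent_aux (φ i) (d i) (hderiv i) _ hM T hT0
            (ε i (k+1)) hd
          exact absurd ht2 (not_le.mpr (hcon t ht1))
        obtain ⟨t0, ht0T, hφt0⟩ := hdes
        -- persistence from t0 via mixed box
        set c' : Fin m → ℝ := fun j => if j = i then ε i (k+1) else ε j k with hc'
        have hbound' : ∀ j t, (0:ℝ) ≤ t → φ j t = c' j →
            (∀ l, φ l t ≤ c' l) → d j t < 0 := by
          intro j t ht heq hle
          have hlek : ∀ l, φ l t ≤ ε l k := by
            intro l
            have := hle l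
            by_cases hl : l = i
            · subst hl
              simp only [hc', if_pos rfl] at this
              exact this.trans (hεdec l (Nat.lt_succ_self k)).le
            · simpa [hc', hl] using this
          by_cases hj : j = i
          · subst hj
            simp only [hc', if_pos rfl] at heq
            refine hLie j k (x t) ⟨heq.ge, hlek j, fun l _ => hlek l⟩
          · simp only [hc', if_neg hj] at heq
            exact hboundk k j t ht heq hlek
        have hinit : ∀ j, φ j t0 ≤ c' j := by
          intro j
          by_cases hj : j = i
          · subst hj; simpa [hc'] using hφt0
          · simpa [hc', hj] using hT t0 ht0T j
        have hpers := inv_aux φ d hderiv c' hbound' t0 (hT0.trans ht0T) hinit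
        refine ⟨t0, ht0T, fun s hs => ?_⟩
        have := hpers s hs i
        simpa [hc'] using this
      choose t ht1 ht2 using step
      refine ⟨T + ∑ j, (t j - T), ?_, ?_⟩
      · have : (0:ℝ) ≤ ∑ j, (t j - T) :=
          Finset.sum_nonneg fun j _ => sub_nonneg.2 (ht1 j)
        linarith
      · intro s hs i
        refine ht2 i s ?_
        have h1 : t i - T ≤ ∑ j, (t j - T) :=
          Finset.single_le_sum (fun j _ => sub_nonneg.2 (ht1 j)) (Finset.mem_univ i)
        linarith
  constructor
  · exact fun t ht i => h0box t ht i
  · intro i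
    have hnn : ∀ t, (0:ℝ) ≤ φ i t := by
      intro t
      by_cases h : x t i = 0
      · simp [hφdef, h, hV0 i]
      · exact (hVpos i _ h).le
    have hcb : IsCoboundedUnder (· ≤ ·) atTop (φ i) := by
      refine ⟨0, fun b hb => ?_⟩
      obtain ⟨t, ht⟩ := (eventually_map.1 hb).exists
      exact (hnn t).trans ht
    have hk : ∀ k, limsup (fun t => V i (x t i)) atTop ≤ ε i k := by
      intro k
      obtain ⟨T, hT0, hT⟩ := main k
      refine limsup_le_of_le hcb ?_
      filter_upwards [eventually_ge_atTop T] with s hs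
      exact hT s hs i
    exact ge_of_tendsto (hεlim i) (Eventually.of_forall hk)
end
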